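/- arXiv:1804.04884 — 2 statements merged into one kernel-verified Lean document; each statement's English description precedes it below -/
import Mathlib

section
/- Let X be a topological vector space, T : X → X a continuous linear operator, X₀ = {x₁, x₂, ...} a sequentially dense countable subset, Sₙ : X₀ → X maps, Y ⊆ X a subspace with a finer F-space topology τ, and (n_k) an increasing sequence of naturals (n₀ = 0) such that: (i)' for each x ∈ X₀ and each j ∈ ℕ, the sequence (T^{n_k} S_{n_j} x)_k is eventually contained in Y and converges to 0 in (Y, τ); (ii)' for each x ∈ X₀ and each j ≥ 0, the sequence (T^{n_j} S_{n_k} x)_k is eventually contained in Y and converges to 0 in (Y, τ); (iii)' for each x ∈ X₀, the sequence (x − T^{n_k} S_{n_k} x)_k is eventually contained in Y and converges to 0 in (Y, τ). Then T is sequentially hypercyclic. -/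
/-!
The hypercyclic vector is `h = ∑ᵢ S_{n_{κ i}} x_{e i}`, where `e` lists every `x_m` infinitely
often and `κ` grows so fast that the `i`-th term lies in `ι '' W (i + 1)`, for a closed
neighbourhood basis `W` of `0` in `Y` with `W (a + 1) + W (a + 1) ⊆ W a`; such series converge in
the complete space `Y`. Conditions (i)'–(iii)' then make `T^{n_{κ l}} h - x_{e l}` the sum of the
`ι`-image of a `Y`-series with `i`-th term in `W (l + i + 1)`, so it tends to `0` in `Y`, hence
in `X`. As `X` need not be Hausdorff, the two sums of one series are only inseparable.
-/

open Filter Topology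
open scoped Pointwise

theorem exists_strictMono_forall_eventually_step {P : ℕ → ℕ → ℕ → Prop}
    (h : ∀ l p, ∀ᶠ c in atTop, P l p c) :
    ∃ k : ℕ → ℕ, StrictMono k ∧ ∀ l, P l (k l) (k (l + 1)) := by
  choose g hgP hg using fun l p => ((h l p).and (eventually_gt_atTop p)).exists
  let k : ℕ → ℕ := fun l => Nat.rec 0 (fun l p => g l p) l
  exact ⟨k, strictMono_nat_of_lt_succ fun l => hg l (k l), fun l => hgP l (k l)⟩

theorem Nat.frequently_atTop_unpair_fst_eq (m : ℕ) : ∃ᶠ l in atTop, (Nat.unpair l).1 = m :=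
  frequently_atTop.2 fun N => ⟨Nat.pair m N, Nat.right_le_pair m N, by simp⟩

theorem IsTopologicalAddGroup.exists_closed_antitone_basis_nhds_zero {Y : Type*}
    [AddCommGroup Y] [TopologicalSpace Y] [IsTopologicalAddGroup Y] [FirstCountableTopology Y] :
    ∃ W : ℕ → Set Y, (𝓝 (0 : Y)).HasAntitoneBasis W ∧ (∀ a, IsClosed (W a)) ∧
      ∀ a, W (a + 1) + W (a + 1) ⊆ W a := by
  obtain ⟨V, hV, hVadd⟩ := IsTopologicalAddGroup.exists_antitone_basis_nhds_zero Y
  refine ⟨fun a => closure (V a), ⟨hV.1.nhds_closure, fun a b hab => closure_mono (hV.2 hab)⟩,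
    fun a => isClosed_closure, fun a => ?_⟩
  refine Set.add_subset_iff.2 fun y hy z hz => closure_mono (hVadd a) ?_
  exact map_mem_closure₂ continuous_add hy hz fun y hy z hz => Set.add_mem_add hy hz

theorem Finset.sum_mem_of_forall_mem_succ {M : Type*} [AddCommMonoid M] {W : ℕ → Set M}
    (hW0 : ∀ a, (0 : M) ∈ W a) (hW : Antitone W) (hadd : ∀ a, W (a + 1) + W (a + 1) ⊆ W a)
    (s : Finset ℕ) (g : ℕ → M) {N : ℕ} (hN : ∀ i ∈ s, N ≤ i) (hg : ∀ i ∈ s, g i ∈ W (i + 1)) :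
    ∑ i ∈ s, g i ∈ W N := by
  induction s using Finset.induction_on_min generalizing N with
  | empty => simpa using hW0 N
  | insert a s ha ih =>
    rw [Finset.sum_insert fun h => lt_irrefl a (ha a h)]
    have haN : N ≤ a := hN a (Finset.mem_insert_self a s)
    refine hadd N (Set.add_mem_add ?_ ?_)
    · exact hW (by omega) (hg a (Finset.mem_insert_self a s))
    · refine hW (by omega : N + 1 ≤ a + 1) (ih (fun i hi => ha i hi) ?_)
      exact fun i hi => hg i (Finset.mem_insert_of_mem hi)

theorem exists_hasSum_mem_of_forall_mem_add_succ {Y : Type*} [AddCommGroup Y] [UniformSpace Y]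
    [IsUniformAddGroup Y] [CompleteSpace Y] {W : ℕ → Set Y} (hW : (𝓝 (0 : Y)).HasAntitoneBasis W)
    (hWc : ∀ a, IsClosed (W a)) (hadd : ∀ a, W (a + 1) + W (a + 1) ⊆ W a)
    {g : ℕ → Y} {N : ℕ} (hg : ∀ i, g i ∈ W (N + i + 1)) : ∃ y ∈ W N, HasSum g y := by
  have hW0 : ∀ a, (0 : Y) ∈ W a := fun a => mem_of_mem_nhds (hW.mem a)
  have hsum : Summable g := by
    refine summable_iff_vanishing.2 fun U hU => ?_
    obtain ⟨a, ha⟩ := hW.mem_iff.1 hU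
    refine ⟨Finset.range a, fun s hs => ha ?_⟩
    refine Finset.sum_mem_of_forall_mem_succ hW0 hW.antitone hadd s g (fun i hi => ?_)
      fun i _ => hW.antitone (by omega) (hg i)
    simpa using Finset.disjoint_left.1 hs hi
  refine ⟨∑' i, g i, (hWc N).mem_of_tendsto hsum.hasSum (Eventually.of_forall fun s => ?_),
    hsum.hasSum⟩
  simpa using Finset.sum_mem_of_forall_mem_succ (W := fun a => W (N + a)) (fun a => hW0 _)
    (fun a b hab => hW.antitone (by omega)) (fun a => hadd (N + a)) s g (N := 0)
    (fun i _ => i.zero_le) fun i _ => hg i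

theorem exists_strictMono_forall_mem_image {X Y F : Type*} [Sub X] [TopologicalSpace Y] [Zero Y]
    [FunLike F Y X] {ι : F} {W : ℕ → Set Y} (hW : ∀ a, W a ∈ 𝓝 (0 : Y)) (hWa : Antitone W)
    {B : ℕ → X → X} {R : ℕ → X → X} {t : ℕ → X}
    (hR : ∀ l, Tendsto (fun c => R c (t l)) atTop ((𝓝 0).map ι))
    (hBR : ∀ l, Tendsto (fun c => B c (R c (t l)) - t l) atTop ((𝓝 0).map ι))
    (hBc : ∀ i a, 1 ≤ a → Tendsto (fun c => B c (R a (t i))) atTop ((𝓝 0).map ι))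
    (hRc : ∀ l a, Tendsto (fun c => B a (R c (t l))) atTop ((𝓝 0).map ι)) :
    ∃ κ : ℕ → ℕ, StrictMono κ ∧ (∀ l, R (κ l) (t l) ∈ ι '' W (l + 1)) ∧
      (∀ l, B (κ l) (R (κ l) (t l)) - t l ∈ ι '' W (l + l + 1)) ∧
      ∀ l i, i ≠ l → B (κ l) (R (κ i) (t i)) ∈ ι '' W (l + i + 1) := by
  have hmem {v : ℕ → X} (hv : Tendsto v atTop ((𝓝 0).map ι)) (a : ℕ) :
      ∀ᶠ c in atTop, v c ∈ ι '' W a :=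
    hv (image_mem_map (hW a))
  -- Quantifying over all `a ≤ p`, `p` the previous choice, makes stage `l` depend only on `(l, p)`.
  obtain ⟨k, hk, hkP⟩ := exists_strictMono_forall_eventually_step (P := fun l p c =>
      R c (t l) ∈ ι '' W (l + 1) ∧ B c (R c (t l)) - t l ∈ ι '' W (l + l + 1) ∧
      (∀ i ∈ Finset.range l, ∀ a ∈ Finset.Icc 1 p, B c (R a (t i)) ∈ ι '' W (l + a + 1)) ∧
      ∀ a ∈ Finset.range (p + 1), B a (R c (t l)) ∈ ι '' W (l + a + 1)) fun l p => by
    refine (hmem (hR l) _).and <| (hmem (hBR l) _).and <| .and ?_ ?_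
    · simp only [eventually_all_finset]
      exact fun i _ a ha => hmem (hBc i a (Finset.mem_Icc.1 ha).1) _
    · simp only [eventually_all_finset]
      exact fun a _ => hmem (hRc l a) _
  have hk_ge (i : ℕ) : i + 1 ≤ k (i + 1) := hk.id_le (i + 1)
  refine ⟨fun l => k (l + 1), fun a b hab => hk (by omega), fun l => (hkP l).1,
    fun l => (hkP l).2.1, fun l i hil => ?_⟩
  rcases hil.lt_or_gt with hil | hil
  · refine Set.image_mono (hWa ?_) ((hkP l).2.2.1 i (Finset.mem_range.2 hil) (k (i + 1)) ?_)
    · have := hk_ge i; omega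
    · exact Finset.mem_Icc.2 ⟨(hk_ge i).trans' (by omega), hk.monotone (by omega)⟩
  · refine Set.image_mono (hWa ?_) ((hkP i).2.2.2 (k (l + 1)) ?_)
    · have := hk_ge l; omega
    · exact Finset.mem_range.2 (Nat.lt_succ_of_le (hk.monotone (by omega)))

theorem exists_tendsto_apply_sub_of_mem_image {X Y F G : Type*} [AddCommGroup X]
    [TopologicalSpace X] [IsTopologicalAddGroup X] [AddCommGroup Y] [UniformSpace Y]
    [IsUniformAddGroup Y] [CompleteSpace Y] [FunLike F Y X] [AddMonoidHomClass F Y X]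
    [FunLike G X X] [AddMonoidHomClass G X X] {ι : F} (hι : Continuous ι) {A : ℕ → G}
    (hA : ∀ l, Continuous (A l)) {W : ℕ → Set Y} (hW : (𝓝 (0 : Y)).HasAntitoneBasis W)
    (hWc : ∀ a, IsClosed (W a)) (hadd : ∀ a, W (a + 1) + W (a + 1) ⊆ W a) {s t : ℕ → X}
    (hs : ∀ l, s l ∈ ι '' W (l + 1)) (hAs : ∀ l, A l (s l) - t l ∈ ι '' W (l + l + 1))
    (hAs' : ∀ l i, i ≠ l → A l (s i) ∈ ι '' W (l + i + 1)) :
    ∃ h : X, Tendsto (fun l => A l h - t l) atTop (𝓝 0) := by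
  choose u hu hιu using hs
  obtain ⟨y, -, hy⟩ := exists_hasSum_mem_of_forall_mem_add_succ hW hWc hadd (N := 0) (g := u)
    (by simpa using hu)
  refine ⟨ι y, ?_⟩
  have hd : ∀ l i, ∃ d ∈ W (l + i + 1), ι d = A l (s i) - (Pi.single l (t l) : ℕ → X) i := by
    intro l i
    rcases eq_or_ne i l with rfl | hil
    · simpa using hAs i
    · simpa [Pi.single_eq_of_ne hil] using hAs' l i hil
  choose d hdW hιd using hd
  choose r hrW hr using fun l => exists_hasSum_mem_of_forall_mem_add_succ hW hWc hadd (hdW l)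
  have hsep : ∀ l, Inseparable (A l (ι y) - t l) (ι (r l)) := by
    intro l
    have hAy : HasSum (fun i => A l (s i)) (A l (ι y)) := by
      simpa [Function.comp_def, hιu] using (hy.map ι hι).map (A l) (hA l)
    have hrl : HasSum (fun i => A l (s i) - (Pi.single l (t l) : ℕ → X) i) (ι (r l)) := by
      simpa [Function.comp_def, hιd] using (hr l).map ι hι
    exact tendsto_nhds_unique_inseparable (hAy.sub (hasSum_pi_single l (t l))) hrl
  have hr0 : Tendsto (fun l => ι (r l)) atTop (𝓝 0) := by
    simpa [Function.comp_def] using (hι.tendsto 0).comp (hW.tendsto hrW)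
  exact Tendsto.specializes hr0 fun l => (hsep l).specializes

theorem exists_strictMono_tendsto_apply_sub {X Y F G : Type*} [AddCommGroup X]
    [TopologicalSpace X] [IsTopologicalAddGroup X] [AddCommGroup Y] [UniformSpace Y]
    [IsUniformAddGroup Y] [CompleteSpace Y] [FirstCountableTopology Y]
    [FunLike F Y X] [AddMonoidHomClass F Y X] [FunLike G X X] [AddMonoidHomClass G X X]
    {ι : F} (hι : Continuous ι) {B : ℕ → G} (hB : ∀ c, Continuous (B c))
    {R : ℕ → X → X} {t : ℕ → X}
    (hR : ∀ l, Tendsto (fun c => R c (t l)) atTop ((𝓝 0).map ι))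
    (hBR : ∀ l, Tendsto (fun c => B c (R c (t l)) - t l) atTop ((𝓝 0).map ι))
    (hBc : ∀ i a, 1 ≤ a → Tendsto (fun c => B c (R a (t i))) atTop ((𝓝 0).map ι))
    (hRc : ∀ l a, Tendsto (fun c => B a (R c (t l))) atTop ((𝓝 0).map ι)) :
    ∃ h : X, ∃ κ : ℕ → ℕ, StrictMono κ ∧ Tendsto (fun l => B (κ l) h - t l) atTop (𝓝 0) := by
  obtain ⟨W, hW, hWc, hadd⟩ :=
    IsTopologicalAddGroup.exists_closed_antitone_basis_nhds_zero (Y := Y)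
  obtain ⟨κ, hκ, hs, hBs, hBs'⟩ :=
    exists_strictMono_forall_mem_image hW.mem hW.antitone hR hBR hBc hRc
  obtain ⟨h, hh⟩ := exists_tendsto_apply_sub_of_mem_image hι (fun l => hB (κ l)) hW hWc hadd
    hs hBs hBs'
  exact ⟨h, κ, hκ, hh⟩

theorem tendsto_map_nhds_zero_of_exists {α Y X F : Type*} [TopologicalSpace Y] [Zero Y]
    [FunLike F Y X] {ι : F} {l : Filter α} {v : α → X}
    (h : ∃ y : α → Y, (∀ᶠ a in l, ι (y a) = v a) ∧ Tendsto y l (𝓝 0)) :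
    Tendsto v l ((𝓝 0).map ι) :=
  let ⟨_, hyv, hy⟩ := h
  (tendsto_map.comp hy).congr' hyv

theorem stmt_1_general {X : Type*} [AddCommGroup X] [Module ℝ X] [TopologicalSpace X]
    [IsTopologicalAddGroup X] (T : X →L[ℝ] X)
    (x : ℕ → X)
    (hdense : ∀ z : X, ∃ σ : ℕ → ℕ, (∀ k, 1 ≤ σ k) ∧
      Tendsto (fun k => x (σ k)) atTop (𝓝 z))
    (S : ℕ → X → X)
    {Y : Type*} [AddCommGroup Y] [Module ℝ Y] [UniformSpace Y]
    [IsUniformAddGroup Y] [CompleteSpace Y]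
    [TopologicalSpace.PseudoMetrizableSpace Y]
    (ι : Y →ₗ[ℝ] X) (hι : Continuous ι)
    (n : ℕ → ℕ) (hn : StrictMono n) (hn0 : n 0 = 0)
    (hi : ∀ m : ℕ, 1 ≤ m → ∀ j : ℕ, 1 ≤ j → ∃ y : ℕ → Y,
      (∀ᶠ k in atTop, ι (y k) = (T ^ n k) (S (n j) (x m))) ∧
      Tendsto y atTop (𝓝 0))
    (hii : ∀ m : ℕ, 1 ≤ m → ∀ j : ℕ, ∃ y : ℕ → Y,
      (∀ᶠ k in atTop, ι (y k) = (T ^ n j) (S (n k) (x m))) ∧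
      Tendsto y atTop (𝓝 0))
    (hiii : ∀ m : ℕ, 1 ≤ m → ∃ y : ℕ → Y,
      (∀ᶠ k in atTop, ι (y k) = x m - (T ^ n k) (S (n k) (x m))) ∧
      Tendsto y atTop (𝓝 0)) :
    ∃ hv : X, ∀ z : X, ∃ m : ℕ → ℕ, StrictMono m ∧
      Tendsto (fun k => (T ^ m k) hv) atTop (𝓝 z) := by
  -- every `x m` with `m ≥ 1` is the target at infinitely many stages
  let e : ℕ → ℕ := fun l => (Nat.unpair l).1 + 1
  have he1 (l : ℕ) : 1 ≤ e l := Nat.le_add_left 1 _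
  have hiii' (l : ℕ) : Tendsto (fun c => (T ^ n c) (S (n c) (x (e l))) - x (e l)) atTop
      ((𝓝 0).map ι) := by
    obtain ⟨y, hyv, hy⟩ := hiii (e l) (he1 l)
    refine tendsto_map_nhds_zero_of_exists ⟨fun k => -y k, ?_, by simpa using hy.neg⟩
    filter_upwards [hyv] with k hk using by simp [hk]
  obtain ⟨h, κ, hκ, hh⟩ := exists_strictMono_tendsto_apply_sub hι (B := fun c => T ^ n c)
    (fun c => (T ^ n c).continuous) (R := fun c => S (n c)) (t := fun l => x (e l))
    (fun l => by simpa [hn0] using tendsto_map_nhds_zero_of_exists (hii _ (he1 l) 0)) hiii'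
    (fun i a ha => tendsto_map_nhds_zero_of_exists (hi _ (he1 i) a ha))
    (fun l a => tendsto_map_nhds_zero_of_exists (hii _ (he1 l) a))
  refine ⟨h, fun z => ?_⟩
  obtain ⟨σ, hσ1, hσ⟩ := hdense z
  obtain ⟨L, hL, hLσ⟩ :=
    extraction_forall_of_frequently fun j => Nat.frequently_atTop_unpair_fst_eq (σ j - 1)
  have he : ∀ j, e (L j) = σ j := fun j => by have := hσ1 j; simp only [e, hLσ]; omega
  refine ⟨fun j => n (κ (L j)), hn.comp (hκ.comp hL), ?_⟩
  simpa [he] using (hh.comp hL.tendsto_atTop).add hσ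

/-- Corollary 1 (hypercyclicity criterion with conditions (i)', (ii)', (iii)'):
`T` is sequentially hypercyclic provided there are a sequentially dense
sequence `(xₙ)` (indexed by `n ≥ 1`), maps `Sₙ`, a subspace `Y ⊆ X` with a
finer F-space topology (modelled by a complete metrizable topological vector
space `Y` together with a continuous injective linear embedding `ι : Y → X`),
and an increasing sequence `(n_k)` with `n₀ = 0` such that for each `x ∈ X₀`
the sequences `(T^{n_k} S_{n_j} x)_k`, `(T^{n_j} S_{n_k} x)_k` and
`(x − T^{n_k} S_{n_k} x)_k` are eventually contained in `Y` and converge to `0`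
in `Y`. -/
theorem stmt_1 {X : Type*} [AddCommGroup X] [Module ℝ X] [TopologicalSpace X]
    [IsTopologicalAddGroup X] [ContinuousSMul ℝ X] (T : X →L[ℝ] X)
    (x : ℕ → X)
    (hdense : ∀ z : X, ∃ σ : ℕ → ℕ, (∀ k, 1 ≤ σ k) ∧
      Tendsto (fun k => x (σ k)) atTop (𝓝 z))
    (S : ℕ → X → X)
    {Y : Type*} [AddCommGroup Y] [Module ℝ Y] [UniformSpace Y]
    [IsUniformAddGroup Y] [ContinuousSMul ℝ Y] [CompleteSpace Y]
    [TopologicalSpace.PseudoMetrizableSpace Y]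
    (ι : Y →ₗ[ℝ] X) (hι : Continuous ι) (hι_inj : Function.Injective ι)
    (n : ℕ → ℕ) (hn : StrictMono n) (hn0 : n 0 = 0)
    (hi : ∀ m : ℕ, 1 ≤ m → ∀ j : ℕ, 1 ≤ j → ∃ y : ℕ → Y,
      (∀ᶠ k in atTop, ι (y k) = (T ^ n k) (S (n j) (x m))) ∧
      Tendsto y atTop (𝓝 0))
    (hii : ∀ m : ℕ, 1 ≤ m → ∀ j : ℕ, ∃ y : ℕ → Y,
      (∀ᶠ k in atTop, ι (y k) = (T ^ n j) (S (n k) (x m))) ∧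
      Tendsto y atTop (𝓝 0))
    (hiii : ∀ m : ℕ, 1 ≤ m → ∃ y : ℕ → Y,
      (∀ᶠ k in atTop, ι (y k) = x m - (T ^ n k) (S (n k) (x m))) ∧
      Tendsto y atTop (𝓝 0)) :
    ∃ hv : X, ∀ z : X, ∃ m : ℕ → ℕ, StrictMono m ∧
      Tendsto (fun k => (T ^ m k) hv) atTop (𝓝 z) :=
  stmt_1_general T x hdense S ι hι n hn hn0 hi hii hiii
end

section
/- Let U = {z ∈ ℂ : |z − 1/2| < 1/2} and let γ(z) = exp((1/2) log z) be the principal square root. Then γ maps U into U: if |z − 1/2| < 1/2 then |√z − 1/2| < 1/2. -/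
/-!
The disk `|z - 1/2| < 1/2` is the set `|z|² < Re z`. The principal square root `w` of `z` has
`Re w ≥ 0`, and `|w|⁴ = |z|² < Re z = (Re w)² - (Im w)² ≤ (Re w)²`, hence `|w|² < Re w`.
-/

namespace Complex

theorem norm_sub_half_lt_half_iff (z : ℂ) : ‖z - 1/2‖ < 1/2 ↔ normSq z < z.re := by
  have hnormSq : normSq (z - 1/2) = normSq z - z.re + 1/4 := by
    simp only [normSq_apply, sub_re, sub_im, div_ofNat_re, div_ofNat_im, one_re, one_im]
    ring
  rw [← sq_lt_sq₀ (norm_nonneg _) (by norm_num), Complex.sq_norm, hnormSq]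
  constructor <;> intro h <;> linarith

theorem normSq_lt_re_of_sq {w : ℂ} (hw : 0 ≤ w.re) (h : normSq (w ^ 2) < (w ^ 2).re) :
    normSq w < w.re := by
  have hsq : normSq w ^ 2 < w.re ^ 2 :=
    calc normSq w ^ 2 = normSq (w ^ 2) := (map_pow normSq w 2).symm
      _ < (w ^ 2).re := h
      _ = w.re ^ 2 - w.im ^ 2 := by simp only [sq, mul_re]
      _ ≤ w.re ^ 2 := sub_le_self _ (sq_nonneg _)
  exact (sq_lt_sq₀ (normSq_nonneg w) hw).mp hsq

theorem exp_half_mul_log {z : ℂ} (hz : z ≠ 0) : exp ((1/2) * log z) = z ^ (2⁻¹ : ℂ) := by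
  rw [cpow_def_of_ne_zero hz, mul_comm, one_div]

end Complex

/-- The principal square root `γ(z) = exp((1/2) log z)` maps the open disk `U`
of center `1/2` and radius `1/2` into itself. -/
theorem stmt_19 (z : ℂ) (hz : ‖z - 1/2‖ < 1/2) :
    ‖Complex.exp ((1/2 : ℂ) * Complex.log z) - 1/2‖ < 1/2 := by
  have hz0 : z ≠ 0 := by
    rintro rfl
    norm_num at hz
  rw [Complex.norm_sub_half_lt_half_iff] at hz
  rw [Complex.exp_half_mul_log hz0, Complex.norm_sub_half_lt_half_iff]
  refine Complex.normSq_lt_re_of_sq (by rw [Complex.cpow_inv_two_re]; positivity) ?_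
  rwa [Complex.cpow_ofNat_inv_pow]
end
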